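/- arXiv:1101.2551 — 2 statements merged into one kernel-verified Lean document; each statement's English description precedes it below -/
import Mathlib

section
/- Let G act on Q with L : TQ → ℝ a G-invariant Lagrangian and p : TQ → 𝔤* the momentum map ⟨A,p⟩ = Ã^V(L). Then p is G-equivariant infinitesimally: for all A, B ∈ 𝔤, ⟨B, Ã^C(p)⟩ = -⟨[A,B], p⟩, where Ã^C is the complete lift of the fundamental vector field Ã and [·,·] is the Lie algebra bracket. -/
/-- Infinitesimal equivariance of the momentum map: for a `G`-invariant
Lagrangian `L` with momentum `⟨A,p⟩ = Ã^V(L)`, one has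
`⟨B, Ã^C(p)⟩ = -⟨[A,B], p⟩`, given `[Ã, B̃] = -([A,B])~`. -/
theorem stmt_10
    {Q 𝔤 : Type*} [NormedAddCommGroup Q] [NormedSpace ℝ Q]
    [NormedAddCommGroup 𝔤] [NormedSpace ℝ 𝔤] [LieRing 𝔤] [LieAlgebra ℝ 𝔤]
    (fund : 𝔤 → Q → Q)
    (hfs : ContDiff ℝ (⊤ : ℕ∞) (fun p : 𝔤 × Q => fund p.1 p.2))
    (hlin : ∀ q, IsLinearMap ℝ (fun A => fund A q))
    (hbracket : ∀ (A B : 𝔤) (q : Q),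
      fderiv ℝ (fund B) q (fund A q) - fderiv ℝ (fund A) q (fund B q)
        = -(fund ⁅A, B⁆ q))
    (L : Q × Q → ℝ) (hL : ContDiff ℝ (⊤ : ℕ∞) L)
    (hLinv : ∀ (A : 𝔤) (x : Q × Q),
      fderiv ℝ L x (fund A x.1, fderiv ℝ (fund A) x.1 x.2) = 0)
    (p : 𝔤 → Q × Q → ℝ)
    (hp : ∀ A x, p A x = fderiv ℝ L x ((0 : Q), fund A x.1)) :
    ∀ (A B : 𝔤) (x : Q × Q),
      fderiv ℝ (p B) x (fund A x.1, fderiv ℝ (fund A) x.1 x.2)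
        = -(p ⁅A, B⁆ x) := by
  intro A B x
  -- smoothness of each fundamental vector field
  have hfC : ∀ C : 𝔤, ContDiff ℝ (⊤ : ℕ∞) (fund C) := fun C =>
    hfs.comp ((contDiff_const (c := C)).prodMk contDiff_id)
  have hd1 : ∀ (C : 𝔤) (q : Q), HasFDerivAt (fund C) (fderiv ℝ (fund C) q) q :=
    fun C q => ((hfC C).differentiable (by simp) q).hasFDerivAt
  have hd2 : ∀ (C : 𝔤) (q : Q),
      HasFDerivAt (fderiv ℝ (fund C)) (fderiv ℝ (fderiv ℝ (fund C)) q) q :=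
    fun C q => ((((hfC C).fderiv_right (m := (⊤ : ℕ∞)) (by simp)).differentiable (by simp)) q).hasFDerivAt
  -- derivative data for L
  have hLd : ∀ y, HasFDerivAt L (fderiv ℝ L y) y :=
    fun y => (hL.differentiable (by simp) y).hasFDerivAt
  set L'' := fderiv ℝ (fderiv ℝ L) x with hL''def
  have hL'd : HasFDerivAt (fderiv ℝ L) L'' x :=
    (((hL.fderiv_right (m := (⊤ : ℕ∞)) (by simp)).differentiable (by simp)) x).hasFDerivAt
  have hsymm := second_derivative_symmetric hLd hL'd
  -- notation
  set a := fund A x.1 with ha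
  set b := fund B x.1 with hb
  set v : Q × Q := (a, fderiv ℝ (fund A) x.1 x.2) with hv
  set w : Q × Q := ((0 : Q), b) with hw
  -- derivative of y ↦ (0, fund B y.1)
  have hgB : HasFDerivAt (fun y : Q × Q => ((0 : Q), fund B y.1))
      ((0 : Q × Q →L[ℝ] Q).prod
        ((fderiv ℝ (fund B) x.1).comp (ContinuousLinearMap.fst ℝ Q Q))) x :=
    HasFDerivAt.prodMk (hasFDerivAt_const (0 : Q) x) ((hd1 B x.1).comp x hasFDerivAt_fst)
  -- derivative of p B
  have hpBfun : p B = fun y => fderiv ℝ L y ((0 : Q), fund B y.1) := funext (hp B)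
  have hpB : HasFDerivAt (p B)
      ((fderiv ℝ L x).comp
          ((0 : Q × Q →L[ℝ] Q).prod
            ((fderiv ℝ (fund B) x.1).comp (ContinuousLinearMap.fst ℝ Q Q)))
        + L''.flip ((0 : Q), fund B x.1)) x := by
    rw [hpBfun]
    exact hL'd.clm_apply hgB
  have hfd : fderiv ℝ (p B) x v
      = fderiv ℝ L x ((0 : Q), fderiv ℝ (fund B) x.1 a) + L'' v w := by
    rw [hpB.fderiv]
    simp [hv, hw, hb, ha]
  -- derivative of y ↦ (fund A y.1, fderiv (fund A) y.1 y.2)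
  have hψ : HasFDerivAt (fun y : Q × Q => fderiv ℝ (fund A) y.1 y.2)
      (((fderiv ℝ (fund A)) x.1).comp (ContinuousLinearMap.snd ℝ Q Q)
        + ((fderiv ℝ (fderiv ℝ (fund A)) x.1).comp
            (ContinuousLinearMap.fst ℝ Q Q)).flip x.2) x :=
    HasFDerivAt.clm_apply ((hd2 A x.1).comp x hasFDerivAt_fst) hasFDerivAt_snd
  have hφ : HasFDerivAt (fun y : Q × Q => (fund A y.1, fderiv ℝ (fund A) y.1 y.2))
      (((fderiv ℝ (fund A) x.1).comp (ContinuousLinearMap.fst ℝ Q Q)).prod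
        (((fderiv ℝ (fund A)) x.1).comp (ContinuousLinearMap.snd ℝ Q Q)
          + ((fderiv ℝ (fderiv ℝ (fund A)) x.1).comp
              (ContinuousLinearMap.fst ℝ Q Q)).flip x.2)) x :=
    HasFDerivAt.prodMk ((hd1 A x.1).comp x hasFDerivAt_fst) hψ
  -- differentiate the invariance identity
  have hHconst : (fun y : Q × Q =>
      fderiv ℝ L y (fund A y.1, fderiv ℝ (fund A) y.1 y.2)) = fun _ => (0 : ℝ) :=
    funext (hLinv A)
  have hH := hL'd.clm_apply hφ
  rw [hHconst] at hH
  have hDzero : ((fderiv ℝ L x).comp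
        ((((fderiv ℝ (fund A) x.1).comp (ContinuousLinearMap.fst ℝ Q Q)).prod
          (((fderiv ℝ (fund A)) x.1).comp (ContinuousLinearMap.snd ℝ Q Q)
            + ((fderiv ℝ (fderiv ℝ (fund A)) x.1).comp
                (ContinuousLinearMap.fst ℝ Q Q)).flip x.2)))
      + L''.flip (fund A x.1, fderiv ℝ (fund A) x.1 x.2)) = 0 :=
    hH.unique (hasFDerivAt_const 0 x)
  have hinv : fderiv ℝ L x ((0 : Q), fderiv ℝ (fund A) x.1 b) + L'' w v = 0 := by
    have := ContinuousLinearMap.ext_iff.1 hDzero w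
    simpa [hw, hv, hb, ha] using this
  -- combine
  rw [hfd, hsymm v w]
  have : L'' w v = -fderiv ℝ L x ((0 : Q), fderiv ℝ (fund A) x.1 b) := by
    linarith [hinv]
  rw [this, hp]
  have hbr := hbracket A B x.1
  have : ((0 : Q), fderiv ℝ (fund B) x.1 a) - ((0 : Q), fderiv ℝ (fund A) x.1 b)
      = ((0 : Q), -(fund ⁅A, B⁆ x.1)) := by
    rw [Prod.mk_sub_mk, sub_zero, ha, hb, hbr]
  calc fderiv ℝ L x ((0 : Q), fderiv ℝ (fund B) x.1 a)
        - fderiv ℝ L x ((0 : Q), fderiv ℝ (fund A) x.1 b)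
      = fderiv ℝ L x (((0 : Q), fderiv ℝ (fund B) x.1 a)
          - ((0 : Q), fderiv ℝ (fund A) x.1 b)) := by rw [map_sub]
    _ = fderiv ℝ L x ((0 : Q), -(fund ⁅A, B⁆ x.1)) := by rw [this]
    _ = -fderiv ℝ L x ((0 : Q), fund ⁅A, B⁆ x.1) := by
          rw [show ((0 : Q), -(fund ⁅A, B⁆ x.1)) = -((0 : Q), fund ⁅A, B⁆ x.1) by
            simp [Prod.neg_mk], map_neg]
end

section
/- Under the hypotheses of the Lagrange-d'Alembert principle with a G-invariant constrained system, the nonholonomic momentum obeys: for every 𝔤-valued function ζ on Q with ζ(q) ∈ 𝔤^q for all q, one has Γ⟨ζ, p⟩ = ⟨ζ̇, p⟩ on C; equivalently ⟨ζ, Γ(p)⟩ = 0, i.e., for each (q,u) ∈ C, Γ_{(q,u)}(p) annihilates 𝔤^q. In particular, if A ∈ 𝔤 satisfies A ∈ 𝔤^q for all q ∈ Q, then the momentum component ⟨A, p⟩ is conserved along Γ. -/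
lemma exists_clm_of_isLinearMap {E F : Type*} [NormedAddCommGroup E] [NormedSpace ℝ E]
    [NormedAddCommGroup F] [NormedSpace ℝ F] {f : E → F}
    (hf : IsLinearMap ℝ f) (hd : DifferentiableAt ℝ f 0) :
    ∃ L : E →L[ℝ] F, f = ⇑L := by
  refine ⟨fderiv ℝ f 0, funext fun v => ?_⟩
  have h : HasFDerivAt f (fderiv ℝ f 0) 0 := hd.hasFDerivAt
  have hc : HasDerivAt (fun t : ℝ => t • v) v 0 := by
    simpa using (hasDerivAt_id (0 : ℝ)).smul_const v
  have h2 : HasDerivAt (f ∘ fun t : ℝ => t • v) (fderiv ℝ f 0 v) 0 := by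
    have h0 : HasFDerivAt f (fderiv ℝ f 0) ((0:ℝ) • v) := by simpa using h
    have := h0.comp_hasDerivAt (0 : ℝ) hc
    simpa using this
  have h3 : HasDerivAt (fun t : ℝ => t • f v) (f v) 0 := by
    simpa using (hasDerivAt_id (0 : ℝ)).smul_const (f v)
  have : (f ∘ fun t : ℝ => t • v) = fun t : ℝ => t • f v := by
    funext t; simp [Function.comp, hf.map_smul]
  rw [this] at h2
  exact h3.unique h2

section key
variable {Q 𝔤 : Type*} [NormedAddCommGroup Q] [NormedSpace ℝ Q]
    [NormedAddCommGroup 𝔤] [NormedSpace ℝ 𝔤]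
    (fund : 𝔤 → Q → Q)

lemma key_deriv
    (hfs : ContDiff ℝ (⊤ : ℕ∞) (fun p : 𝔤 × Q => fund p.1 p.2))
    (hlin : ∀ q, IsLinearMap ℝ (fun A => fund A q))
    (ζ : Q → 𝔤) (hζ : ContDiff ℝ (⊤ : ℕ∞) ζ) (q : Q) (v : Q) :
    fderiv ℝ (fun q' => fund (ζ q') q') q v
      = fund (fderiv ℝ ζ q v) q + fderiv ℝ (fund (ζ q)) q v := by
  set F : 𝔤 × Q → Q := fun pr => fund pr.1 pr.2 with hF
  set A := ζ q with hA
  have hFd : HasFDerivAt F (fderiv ℝ F (A, q)) (A, q) :=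
    (hfs.differentiable (by simp) (A, q)).hasFDerivAt
  -- derivative of q' ↦ (ζ q', q')
  have hζd : HasFDerivAt (fun q' => (ζ q', q'))
      ((fderiv ℝ ζ q).prod (ContinuousLinearMap.id ℝ Q)) q :=
    (hζ.differentiable (by simp) q).hasFDerivAt.prodMk (hasFDerivAt_id q)
  have hZ : HasFDerivAt (fun q' => fund (ζ q') q')
      ((fderiv ℝ F (A, q)).comp ((fderiv ℝ ζ q).prod (ContinuousLinearMap.id ℝ Q))) q :=
    HasFDerivAt.comp (f := fun q' => (ζ q', q')) q hFd hζd
  -- derivative of fund A = q' ↦ F (A, q')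
  have hA2 : HasFDerivAt (fun q' => (A, q')) (ContinuousLinearMap.inr ℝ 𝔤 Q) q := by
    exact (hasFDerivAt_const A q).prodMk (hasFDerivAt_id q)
  have hfundA : HasFDerivAt (fund A)
      ((fderiv ℝ F (A, q)).comp (ContinuousLinearMap.inr ℝ 𝔤 Q)) q :=
    HasFDerivAt.comp (f := fun q' => (A, q')) q hFd hA2
  -- derivative of B ↦ fund B q
  have hB2 : HasFDerivAt (fun B : 𝔤 => (B, q)) (ContinuousLinearMap.inl ℝ 𝔤 Q) A := by
    exact (hasFDerivAt_id A).prodMk (hasFDerivAt_const q A)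
  have hfundB : HasFDerivAt (fun B => fund B q)
      ((fderiv ℝ F (A, q)).comp (ContinuousLinearMap.inl ℝ 𝔤 Q)) A :=
    HasFDerivAt.comp (f := fun B : 𝔤 => (B, q)) A hFd hB2
  have hdq : DifferentiableAt ℝ (fun B => fund B q) 0 :=
    (hfs.comp (contDiff_id.prodMk contDiff_const)).differentiable (by simp) 0
  obtain ⟨Lq, hLq⟩ := exists_clm_of_isLinearMap (hlin q) hdq
  have hB3 : fderiv ℝ F (A, q) (fderiv ℝ ζ q v, 0) = fund (fderiv ℝ ζ q v) q := by
    have h1 : fderiv ℝ (fun B => fund B q) A = Lq := by rw [hLq]; exact Lq.fderiv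
    have := hfundB.fderiv
    rw [h1] at this
    have := congrArg (fun (T : 𝔤 →L[ℝ] Q) => T (fderiv ℝ ζ q v)) this
    simp only [ContinuousLinearMap.comp_apply, ContinuousLinearMap.inl_apply] at this
    rw [← this]
    exact (congrFun hLq _).symm
  have hsplit : fderiv ℝ F (A, q) (fderiv ℝ ζ q v, v)
      = fderiv ℝ F (A, q) (fderiv ℝ ζ q v, 0) + fderiv ℝ F (A, q) (0, v) := by
    rw [← map_add]; norm_num
  rw [hZ.fderiv]
  simp only [ContinuousLinearMap.comp_apply, ContinuousLinearMap.prod_apply,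
    ContinuousLinearMap.id_apply]
  rw [hsplit, hB3, hfundA.fderiv]
  simp [ContinuousLinearMap.comp_apply]

end key

/-- The nonholonomic momentum equation: for every `𝔤`-valued `ζ` with
`ζ(q) ∈ 𝔤^q` (i.e. the fundamental field of `ζ(q)` lies in `D_q`), `Γ⟨ζ,p⟩ = ⟨ζ̇,p⟩`
on `C`; equivalently `⟨ζ,Γ(p)⟩ = 0` on `C`. In particular if `A ∈ 𝔤^q` for all `q`,
the momentum component `⟨A,p⟩` is conserved along `Γ`. -/
theorem stmt_16
    {Q 𝔤 : Type*} [NormedAddCommGroup Q] [NormedSpace ℝ Q]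
    [NormedAddCommGroup 𝔤] [NormedSpace ℝ 𝔤]
    (fund : 𝔤 → Q → Q)
    (hfs : ContDiff ℝ (⊤ : ℕ∞) (fun p : 𝔤 × Q => fund p.1 p.2))
    (hlin : ∀ q, IsLinearMap ℝ (fun A => fund A q))
    (D : Q → Submodule ℝ Q)
    (C : Set (Q × Q)) (hC : C = {x : Q × Q | x.2 ∈ D x.1})
    (L : Q × Q → ℝ) (hL : ContDiff ℝ (⊤ : ℕ∞) L)
    (hLinv : ∀ (A : 𝔤) (x : Q × Q),
      fderiv ℝ L x (fund A x.1, fderiv ℝ (fund A) x.1 x.2) = 0)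
    (Γ : Q × Q → Q × Q) (hΓ : ContDiff ℝ (⊤ : ℕ∞) Γ)
    (hsode : ∀ x ∈ C, (Γ x).1 = x.2)
    (hLdA : ∀ (Z : Q → Q), ContDiff ℝ (⊤ : ℕ∞) Z → (∀ q, Z q ∈ D q) → ∀ x ∈ C,
      fderiv ℝ (fun y : Q × Q => fderiv ℝ L y ((0 : Q), Z y.1)) x (Γ x)
        - fderiv ℝ L x (Z x.1, fderiv ℝ Z x.1 x.2) = 0)
    (p : 𝔤 → Q × Q → ℝ)
    (hp : ∀ A x, p A x = fderiv ℝ L x ((0 : Q), fund A x.1)) :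
    (∀ (ζ : Q → 𝔤), ContDiff ℝ (⊤ : ℕ∞) ζ → (∀ q, fund (ζ q) q ∈ D q) →
      (∀ x ∈ C, fderiv ℝ (fun y : Q × Q => p (ζ y.1) y) x (Γ x)
          = p (fderiv ℝ ζ x.1 x.2) x) ∧
      (∀ x ∈ C, fderiv ℝ (p (ζ x.1)) x (Γ x) = 0)) ∧
    (∀ A : 𝔤, (∀ q, fund A q ∈ D q) → ∀ x ∈ C, fderiv ℝ (p A) x (Γ x) = 0) := by
  have hcsm : ContDiff ℝ (⊤ : ℕ∞) (fderiv ℝ L) := hL.fderiv_right (by simp)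
  have main : ∀ (ζ : Q → 𝔤), ContDiff ℝ (⊤ : ℕ∞) ζ → (∀ q, fund (ζ q) q ∈ D q) →
      (∀ x ∈ C, fderiv ℝ (fun y : Q × Q => p (ζ y.1) y) x (Γ x)
          = p (fderiv ℝ ζ x.1 x.2) x) ∧
      (∀ x ∈ C, fderiv ℝ (p (ζ x.1)) x (Γ x) = 0) := by
    intro ζ hζ hζD
    have hZsm : ContDiff ℝ (⊤ : ℕ∞) (fun q => fund (ζ q) q) := hfs.comp (hζ.prodMk contDiff_id)
    have claim1 : ∀ x ∈ C, fderiv ℝ (fun y : Q × Q => p (ζ y.1) y) x (Γ x)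
        = p (fderiv ℝ ζ x.1 x.2) x := by
      intro x hx
      have h1 := hLdA (fun q => fund (ζ q) q) hZsm hζD x hx
      rw [sub_eq_zero] at h1
      have hfun : (fun y : Q × Q => p (ζ y.1) y)
          = fun y : Q × Q => fderiv ℝ L y ((0 : Q), fund (ζ y.1) y.1) :=
        funext fun y => hp _ y
      rw [hfun, h1]
      have hkey := key_deriv fund hfs hlin ζ hζ x.1 x.2
      have hsplit : (fund (ζ x.1) x.1, fderiv ℝ (fun q' => fund (ζ q') q') x.1 x.2)
          = (fund (ζ x.1) x.1, fderiv ℝ (fund (ζ x.1)) x.1 x.2)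
            + ((0 : Q), fund (fderiv ℝ ζ x.1 x.2) x.1) := by
        rw [hkey, Prod.mk_add_mk, add_zero, add_comm]
      rw [hsplit, map_add, hLinv (ζ x.1) x, zero_add]
      exact (hp _ x).symm
    refine ⟨claim1, ?_⟩
    intro x hx
    -- derivative setup
    have hc : HasFDerivAt (fderiv ℝ L) (fderiv ℝ (fderiv ℝ L) x) x :=
      (hcsm.differentiable (by simp) x).hasFDerivAt
    have hfundAd : HasFDerivAt (fund (ζ x.1)) (fderiv ℝ (fund (ζ x.1)) x.1) x.1 :=
      ((hfs.comp (contDiff_const.prodMk contDiff_id)).differentiable (by simp) x.1).hasFDerivAt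
    have hZd : HasFDerivAt (fun q => fund (ζ q) q)
        (fderiv ℝ (fun q => fund (ζ q) q) x.1) x.1 :=
      (hZsm.differentiable (by simp) x.1).hasFDerivAt
    have hfst : HasFDerivAt (fun y : Q × Q => y.1) (ContinuousLinearMap.fst ℝ Q Q) x :=
      hasFDerivAt_fst
    have hu : HasFDerivAt (fun y : Q × Q => ((0 : Q), fund (ζ x.1) y.1))
        ((0 : (Q × Q) →L[ℝ] Q).prod
          ((fderiv ℝ (fund (ζ x.1)) x.1).comp (ContinuousLinearMap.fst ℝ Q Q))) x :=
      (hasFDerivAt_const (0 : Q) x).prodMk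
        (HasFDerivAt.comp (f := fun y : Q × Q => y.1) x hfundAd hfst)
    have hw : HasFDerivAt (fun y : Q × Q => ((0 : Q), fund (ζ y.1) y.1))
        ((0 : (Q × Q) →L[ℝ] Q).prod
          ((fderiv ℝ (fun q => fund (ζ q) q) x.1).comp (ContinuousLinearMap.fst ℝ Q Q))) x :=
      (hasFDerivAt_const (0 : Q) x).prodMk
        (HasFDerivAt.comp (f := fun y : Q × Q => y.1) x hZd hfst)
    have hPA := hc.clm_apply hu
    have hPZ := hc.clm_apply hw
    have hfunA : p (ζ x.1) = fun y : Q × Q => fderiv ℝ L y ((0 : Q), fund (ζ x.1) y.1) :=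
      funext fun y => hp _ y
    have hfunZ : (fun y : Q × Q => p (ζ y.1) y)
        = fun y : Q × Q => fderiv ℝ L y ((0 : Q), fund (ζ y.1) y.1) :=
      funext fun y => hp _ y
    have E2 : fderiv ℝ (p (ζ x.1)) x (Γ x)
        = fderiv ℝ L x ((0 : Q), fderiv ℝ (fund (ζ x.1)) x.1 (Γ x).1)
          + (fderiv ℝ (fderiv ℝ L) x (Γ x)) ((0 : Q), fund (ζ x.1) x.1) := by
      rw [hfunA, hPA.fderiv]
      simp
    have E1 : fderiv ℝ (fun y : Q × Q => p (ζ y.1) y) x (Γ x)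
        = fderiv ℝ L x ((0 : Q), fderiv ℝ (fun q => fund (ζ q) q) x.1 (Γ x).1)
          + (fderiv ℝ (fderiv ℝ L) x (Γ x)) ((0 : Q), fund (ζ x.1) x.1) := by
      rw [hfunZ, hPZ.fderiv]
      simp
    rw [hsode x hx] at E1 E2
    rw [claim1 x hx] at E1
    rw [key_deriv fund hfs hlin ζ hζ x.1 x.2] at E1
    have hadd : ((0 : Q), fund (fderiv ℝ ζ x.1 x.2) x.1 + fderiv ℝ (fund (ζ x.1)) x.1 x.2)
        = ((0 : Q), fund (fderiv ℝ ζ x.1 x.2) x.1)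
          + ((0 : Q), fderiv ℝ (fund (ζ x.1)) x.1 x.2) := by
      rw [Prod.mk_add_mk, add_zero]
    rw [hadd, map_add, ← hp] at E1
    rw [E2]
    linarith [E1]
  refine ⟨main, ?_⟩
  intro A hA x hx
  have := (main (fun _ => A) contDiff_const (fun q => hA q)).2 x hx
  simpa using this
end
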